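/- arXiv:2004.08325 — 5 statements merged into one kernel-verified Lean document; each statement's English description precedes it below -/
import Mathlib

section
/- Peel's theorem: with X a subset of column k of T, Y a subset of column k+1, and |X∪Y| greater than the length of column k, the set B = S_{X∪Y}·C(T) ⊆ Σ_r is a disjoint union of pairs {π, π·α_π} where α_π ∈ R(T) is a transposition. -/
open Finset TensorProduct
open scoped Classical

noncomputable section

namespace Schur

variable {X : Type*}

/-- Parity of the even symbols `0,...,m-1` is `0`, of the odd symbols `m,...,m+n-1` is `1`. -/
def degp (m n : ℕ) : Fin (m + n) → ℕ := fun x => if x.val < m then 0 else 1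

/-- Supercommutativity relations for the generators `c_{uv}` of `A(m|n)`. -/
def Rel (K : Type*) [CommRing K] (par : X → ℕ) :
    FreeAlgebra K (X × X) → FreeAlgebra K (X × X) → Prop := fun a b =>
  ∃ u v : X × X,
    a = FreeAlgebra.ι K u * FreeAlgebra.ι K v ∧
    b = ((-1 : K) ^ ((par u.1 + par u.2) * (par v.1 + par v.2))) •
        (FreeAlgebra.ι K v * FreeAlgebra.ι K u)

/-- The supersymmetric bialgebra `A(m|n)` (as an algebra). -/
abbrev A (K : Type*) [CommRing K] (par : X → ℕ) := RingQuot (Rel K par)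

/-- The generator `c_{uv}`. -/
def gen (K : Type*) [CommRing K] (par : X → ℕ) (u v : X) : A K par :=
  RingQuot.mkAlgHom K (Rel K par) (FreeAlgebra.ι K (u, v))

variable (r : ℕ)

/-- The sign relating `χ_{i,j}` to the ordered monomial `c_{i_1 j_1} ⋯ c_{i_r j_r}`. -/
def chiSign (par : X → ℕ) (i j : Fin r → X) : ℤ :=
  (-1) ^ (∑ t : Fin r, par (i t) *
    ∑ s ∈ univ.filter (fun s => t < s), (par (i s) + par (j s)))

/-- The signed monomial `χ_{i,j}` in `A(m|n,r)`. -/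
def chi (K : Type*) [CommRing K] (par : X → ℕ) (i j : Fin r → X) : A K par :=
  chiSign r par i j • ((List.finRange r).map (fun t => gen K par (i t) (j t))).prod

/-- The sign `(-1)^{s(j,π)}` of the `*`-action: it counts inversions of `π` among
odd entries of `j`. -/
def starSign (par : X → ℕ) (j : Fin r → X) (π : Equiv.Perm (Fin r)) : ℤ :=
  (-1) ^ (univ.filter (fun p : Fin r × Fin r =>
      p.1 < p.2 ∧ π p.2 < π p.1 ∧ par (j p.1) ≠ 0 ∧ par (j p.2) ≠ 0)).card

/-- A basic tableau: a partition shape `lam` together with a bijective labelling of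
its cells `(row, col)` by `{1,...,r}`. -/
structure BasicTableau (r : ℕ) where
  lam : ℕ → ℕ
  antitone : ∀ a b : ℕ, a ≤ b → lam b ≤ lam a
  pos : Fin r → ℕ × ℕ
  mem : ∀ t, (pos t).2 < lam (pos t).1
  inj : Function.Injective pos
  surj : ∀ c : ℕ × ℕ, c.2 < lam c.1 → ∃ t, pos t = c

/-- The row stabilizer `R(T)`. -/
def rowStab (T : BasicTableau r) : Finset (Equiv.Perm (Fin r)) :=
  univ.filter (fun σ => ∀ t, (T.pos (σ t)).1 = (T.pos t).1)

/-- The column stabilizer `C(T)`. -/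
def colStab (T : BasicTableau r) : Finset (Equiv.Perm (Fin r)) :=
  univ.filter (fun σ => ∀ t, (T.pos (σ t)).2 = (T.pos t).2)

/-- The symmetrizer `T[i:j] = Σ_{ρ∈R(T)} Σ_{κ∈C(T)} sgn(κ) χ_{i*ρ, j*κ}`. -/
def symmA (K : Type*) [CommRing K] (par : X → ℕ) (T : BasicTableau r)
    (i j : Fin r → X) : A K par :=
  ∑ ρ ∈ rowStab r T, ∑ κ ∈ colStab r T,
    ((Equiv.Perm.sign κ : ℤ) * starSign r par i ρ * starSign r par j κ) •
      chi r K par (i ∘ ρ) (j ∘ κ)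

/-- The symmetrizer in the form `T[i:j] = Σ_{ρ∈R(T)} Σ_{κ∈C(T)} sgn(κ) χ_{i, j*κ*ρ}`. -/
def symmB (K : Type*) [CommRing K] (par : X → ℕ) (T : BasicTableau r)
    (i j : Fin r → X) : A K par :=
  ∑ ρ ∈ rowStab r T, ∑ κ ∈ colStab r T,
    ((Equiv.Perm.sign κ : ℤ) * starSign r par j κ * starSign r par (j ∘ κ) ρ) •
      chi r K par i (j ∘ κ ∘ ρ)

/-- The symmetrizer in the form `T[i:j] = Σ_{κ∈C(T)} Σ_{ρ∈R(T)} sgn(κ) χ_{i*ρ*κ, j}`. -/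
def symmC (K : Type*) [CommRing K] (par : X → ℕ) (T : BasicTableau r)
    (i j : Fin r → X) : A K par :=
  ∑ κ ∈ colStab r T, ∑ ρ ∈ rowStab r T,
    ((Equiv.Perm.sign κ : ℤ) * starSign r par i ρ * starSign r par (i ∘ ρ) κ) •
      chi r K par (i ∘ ρ ∘ κ) j

/-- Semistandardness (in the super sense) of the filling `j` of the tableau `T`. -/
def Semistandard [LinearOrder X] (par : X → ℕ) (T : BasicTableau r)
    (j : Fin r → X) : Prop :=
  (∀ t s, (T.pos t).1 = (T.pos s).1 → (T.pos t).2 ≤ (T.pos s).2 → j t ≤ j s) ∧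
  (∀ t s, (T.pos t).2 = (T.pos s).2 → (T.pos t).1 ≤ (T.pos s).1 → j t ≤ j s) ∧
  (∀ t s, t ≠ s → (T.pos t).2 = (T.pos s).2 → par (j t) = 0 → j t ≠ j s) ∧
  (∀ t s, t ≠ s → (T.pos t).1 = (T.pos s).1 → par (j t) ≠ 0 → j t ≠ j s)

/-- `r_{qp}`: the number of entries `≤ p` in the first `q` rows. -/
def rCount [LinearOrder X] (T : BasicTableau r) (j : Fin r → X) (q : ℕ) (p : X) : ℕ :=
  (univ.filter (fun t => (T.pos t).1 < q ∧ j t ≤ p)).card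

/-- `c_{qp}`: the number of entries `≤ p` in the first `q` columns. -/
def cCount [LinearOrder X] (T : BasicTableau r) (j : Fin r → X) (q : ℕ) (p : X) : ℕ :=
  (univ.filter (fun t => (T.pos t).2 < q ∧ j t ≤ p)).card

/-- Row dominance preorder `T_l ⊴_r T_j`: `(r_{qp}(l)) ≤_lex (r_{qp}(j))`,
listing first by `q`, then by `p`. -/
def rowDom [LinearOrder X] (T : BasicTableau r) (l j : Fin r → X) : Prop :=
  (∀ q p, rCount r T l q p = rCount r T j q p) ∨
  ∃ (q : ℕ) (p : X), rCount r T l q p < rCount r T j q p ∧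
    ∀ (q' : ℕ) (p' : X), (q' < q ∨ (q' = q ∧ p' < p)) →
      rCount r T l q' p' = rCount r T j q' p'

/-- Column dominance preorder `T_k ⊴_c T_i`: `(c_{qp}(k)) ≤_lex (c_{qp}(i))`. -/
def colDom [LinearOrder X] (T : BasicTableau r) (k i : Fin r → X) : Prop :=
  (∀ q p, cCount r T k q p = cCount r T i q p) ∨
  ∃ (q : ℕ) (p : X), cCount r T k q p < cCount r T i q p ∧
    ∀ (q' : ℕ) (p' : X), (q' < q ∨ (q' = q ∧ p' < p)) →
      cCount r T k q' p' = cCount r T i q' p'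

/-- `σ` moves only points of `Z`; i.e. `σ ∈ S_Z`. -/
def fixesOutside (Z : Finset (Fin r)) (σ : Equiv.Perm (Fin r)) : Prop :=
  ∀ t, t ∉ Z → σ t = t

/-- Membership in the subgroup `S_X × S_Y` of `S_{X∪Y}`. -/
def prodSub (Xs Ys : Finset (Fin r)) (σ : Equiv.Perm (Fin r)) : Prop :=
  (∀ t ∈ Xs, σ t ∈ Xs) ∧ (∀ t ∈ Ys, σ t ∈ Ys) ∧ fixesOutside r (Xs ∪ Ys) σ

/-- Two fillings have the same content. -/
def sameContent (i j : Fin r → X) : Prop :=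
  ∀ v : X, (univ.filter (fun t => i t = v)).card = (univ.filter (fun t => j t = v)).card

/-- `f < g` in the column lexicographic order: at the first cell (reading column by
column, each column top to bottom) where they differ, `f` is smaller. -/
def colLexLt [LinearOrder X] (T : BasicTableau r) (f g : Fin r → X) : Prop :=
  ∃ t, f t < g t ∧ ∀ s,
    ((T.pos s).2 < (T.pos t).2 ∨ ((T.pos s).2 = (T.pos t).2 ∧ (T.pos s).1 < (T.pos t).1)) →
    f s = g s

/-- `r(T_i)`: product of factorials of row multiplicities of even symbols. -/
def rFact [Fintype X] (par : X → ℕ) (T : BasicTableau r) (i : Fin r → X) : ℕ :=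
  ∏ a : X, ∏ q ∈ Finset.range r,
    if par a = 0 then
      Nat.factorial (univ.filter (fun t => i t = a ∧ (T.pos t).1 = q)).card
    else 1

/-- `c(T_j)`: product of factorials of column multiplicities of odd symbols. -/
def cFact [Fintype X] (par : X → ℕ) (T : BasicTableau r) (j : Fin r → X) : ℕ :=
  ∏ a : X, ∏ q ∈ Finset.range r,
    if par a ≠ 0 then
      Nat.factorial (univ.filter (fun t => j t = a ∧ (T.pos t).2 = q)).card
    else 1

/-- The modified symmetrizer `T{i:j} = T[i:j]/(r(T_i)c(T_j))` over `ℚ`. -/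
def modSymm (m n : ℕ) (T : BasicTableau r) (i j : Fin r → Fin (m + n)) :
    A ℚ (degp m n) :=
  (((rFact r (degp m n) T i * cFact r (degp m n) T j : ℕ) : ℚ))⁻¹ •
    symmA r ℚ (degp m n) T i j

/-!
For `π = σκ ∈ B` the cells `π⁻¹(X ∪ Y) = κ⁻¹(X ∪ Y)` lie in columns `k` and `k + 1`, so each
of their rows is a row of column `k`; as there are more of these cells than rows of column `k`,
two of them, `a ≠ b`, share a row. Then `π · swap a b = swap (π a) (π b) · σ · κ` lies in `B`
again and has the same preimage of `X ∪ Y`, so choosing the transposition `α_π` as a function of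
`π⁻¹(X ∪ Y)` alone makes `π ↦ π α_π` an involution without fixed points.
-/

-- `1` when `f` is injective on `s`.
def collisionSwap {α β : Type*} [DecidableEq α] (f : α → β) (s : Finset α) : Equiv.Perm α :=
  if h : ∃ p : α × α, p.1 ∈ s ∧ p.2 ∈ s ∧ p.1 ≠ p.2 ∧ f p.1 = f p.2
  then Equiv.swap h.choose.1 h.choose.2 else 1

theorem exists_collisionSwap_eq {α β : Type*} [DecidableEq α] {f : α → β} {s : Finset α}
    (h : ∃ a ∈ s, ∃ b ∈ s, a ≠ b ∧ f a = f b) :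
    ∃ a ∈ s, ∃ b ∈ s, a ≠ b ∧ f a = f b ∧ collisionSwap f s = Equiv.swap a b := by
  obtain ⟨a, ha, b, hb, hab, hf⟩ := h
  have hp : ∃ p : α × α, p.1 ∈ s ∧ p.2 ∈ s ∧ p.1 ≠ p.2 ∧ f p.1 = f p.2 :=
    ⟨(a, b), ha, hb, hab, hf⟩
  obtain ⟨ha', hb', hab', hf'⟩ := hp.choose_spec
  exact ⟨_, ha', _, hb', hab', hf', dif_pos hp⟩

theorem map_symm_mul_swap {α : Type*} [DecidableEq α] {Z : Finset α} {π : Equiv.Perm α}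
    {a b : α} (ha : π a ∈ Z) (hb : π b ∈ Z) :
    Z.map (π * Equiv.swap a b).symm.toEmbedding = Z.map π.symm.toEmbedding := by
  ext t
  simp only [mem_map_equiv, Equiv.symm_symm, Equiv.Perm.mul_apply]
  rcases eq_or_ne t a with rfl | hta
  · simp [ha, hb]
  rcases eq_or_ne t b with rfl | htb
  · simp [ha, hb]
  · rw [Equiv.swap_apply_of_ne_of_ne hta htb]

section Peel

variable {r : ℕ}

theorem fixesOutside.apply_mem_iff {Z : Finset (Fin r)} {σ : Equiv.Perm (Fin r)}
    (hσ : fixesOutside r Z σ) (t : Fin r) : σ t ∈ Z ↔ t ∈ Z := by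
  by_cases ht : t ∈ Z
  · refine iff_of_true ?_ ht
    by_contra hσt
    rw [σ.injective (hσ _ hσt)] at hσt
    exact hσt ht
  · rw [hσ t ht]

theorem fixesOutside.swap_mul {Z : Finset (Fin r)} {σ : Equiv.Perm (Fin r)}
    (hσ : fixesOutside r Z σ) {a b : Fin r} (ha : a ∈ Z) (hb : b ∈ Z) :
    fixesOutside r Z (Equiv.swap a b * σ) := by
  intro t ht
  rw [Equiv.Perm.mul_apply, hσ t ht,
    Equiv.swap_apply_of_ne_of_ne (ne_of_mem_of_not_mem ha ht).symm
      (ne_of_mem_of_not_mem hb ht).symm]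

theorem BasicTableau.exists_same_row_of_col_le (T : BasicTableau r) {k : ℕ} {t : Fin r}
    (hk : k ≤ (T.pos t).2) : ∃ s, (T.pos s).2 = k ∧ (T.pos s).1 = (T.pos t).1 := by
  obtain ⟨s, hs⟩ := T.surj ((T.pos t).1, k) (hk.trans_lt (T.mem t))
  exact ⟨s, by simp [hs], by simp [hs]⟩

/-- Pigeonhole: every row meeting `s` also meets column `k`. -/
theorem BasicTableau.exists_ne_same_row_of_card_col_lt (T : BasicTableau r) {k : ℕ}
    {s : Finset (Fin r)} (hs : ∀ t ∈ s, k ≤ (T.pos t).2)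
    (hcard : (univ.filter (fun t => (T.pos t).2 = k)).card < s.card) :
    ∃ a ∈ s, ∃ b ∈ s, a ≠ b ∧ (T.pos a).1 = (T.pos b).1 := by
  refine exists_ne_map_eq_of_card_lt_of_maps_to
    (t := (univ.filter (fun t => (T.pos t).2 = k)).image fun t => (T.pos t).1)
    (card_image_le.trans_lt hcard) fun t ht => ?_
  obtain ⟨u, hu, hrow⟩ := T.exists_same_row_of_col_le (hs t ht)
  exact mem_image.mpr ⟨u, mem_filter.mpr ⟨mem_univ _, hu⟩, hrow⟩

theorem swap_mem_rowStab (T : BasicTableau r) {a b : Fin r}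
    (hab : (T.pos a).1 = (T.pos b).1) : Equiv.swap a b ∈ rowStab r T := by
  refine mem_filter.mpr ⟨mem_univ _, fun t => ?_⟩
  rcases eq_or_ne t a with rfl | hta
  · rw [Equiv.swap_apply_left, hab]
  rcases eq_or_ne t b with rfl | htb
  · rw [Equiv.swap_apply_right, hab]
  · rw [Equiv.swap_apply_of_ne_of_ne hta htb]

/-- The set `B = S_Z C(T)`. -/
def symMulColStab (Z : Finset (Fin r)) (T : BasicTableau r) : Set (Equiv.Perm (Fin r)) :=
  {π | ∃ σ κ, fixesOutside r Z σ ∧ κ ∈ colStab r T ∧ π = σ * κ}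

theorem mul_swap_mem_symMulColStab {Z : Finset (Fin r)} {T : BasicTableau r}
    {π : Equiv.Perm (Fin r)} (hπ : π ∈ symMulColStab Z T) {a b : Fin r}
    (ha : π a ∈ Z) (hb : π b ∈ Z) : π * Equiv.swap a b ∈ symMulColStab Z T := by
  obtain ⟨σ, κ, hσ, hκ, rfl⟩ := hπ
  refine ⟨Equiv.swap ((σ * κ) a) ((σ * κ) b) * σ, κ, hσ.swap_mul ha hb, hκ, ?_⟩
  rw [Equiv.mul_swap_eq_swap_mul, mul_assoc]

theorem col_le_of_mem_symMulColStab {Z : Finset (Fin r)} {T : BasicTableau r} {k : ℕ}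
    (hZ : ∀ z ∈ Z, k ≤ (T.pos z).2) {π : Equiv.Perm (Fin r)} (hπ : π ∈ symMulColStab Z T)
    {t : Fin r} (ht : π t ∈ Z) : k ≤ (T.pos t).2 := by
  obtain ⟨σ, κ, hσ, hκ, rfl⟩ := hπ
  rw [← (mem_filter.mp hκ).2 t]
  exact hZ _ ((hσ.apply_mem_iff _).mp ht)

end Peel

/-- Peel's theorem: with `X` in column `k`, `Y` in column `k+1` and
`|X∪Y|` exceeding the length of column `k`, the set `B = S_{X∪Y}·C(T)` is a disjoint
union of pairs `{π, π·α_π}` with `α_π ∈ R(T)` a transposition. -/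
theorem stmt6 (r k : ℕ) (T : BasicTableau r) (Xs Ys : Finset (Fin r))
    (hX : ∀ t ∈ Xs, (T.pos t).2 = k) (hY : ∀ t ∈ Ys, (T.pos t).2 = k + 1)
    (hcard : (univ.filter (fun t => (T.pos t).2 = k)).card < (Xs ∪ Ys).card) :
    ∃ α : Equiv.Perm (Fin r) → Equiv.Perm (Fin r),
      ∀ π ∈ {π : Equiv.Perm (Fin r) |
          ∃ σ κ, fixesOutside r (Xs ∪ Ys) σ ∧ κ ∈ colStab r T ∧ π = σ * κ},
        (α π).IsSwap ∧ α π ∈ rowStab r T ∧ π * α π ≠ π ∧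
        (π * α π) ∈ {π : Equiv.Perm (Fin r) |
          ∃ σ κ, fixesOutside r (Xs ∪ Ys) σ ∧ κ ∈ colStab r T ∧ π = σ * κ} ∧
        α (π * α π) = α π := by
  set Z := Xs ∪ Ys
  have hZ : ∀ z ∈ Z, k ≤ (T.pos z).2 := by
    intro z hz
    rcases mem_union.mp hz with h | h
    · exact (hX z h).ge
    · exact (hY z h).ge.trans' k.le_succ
  refine ⟨fun π => collisionSwap (fun t => (T.pos t).1) (Z.map π.symm.toEmbedding), ?_⟩
  intro π (hπ : π ∈ symMulColStab Z T)
  have hcollision := T.exists_ne_same_row_of_card_col_lt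
    (s := Z.map π.symm.toEmbedding)
    (fun t ht => col_le_of_mem_symMulColStab hZ hπ (by simpa using ht))
    (by rwa [card_map])
  obtain ⟨a, ha, b, hb, hab, hrow, hα⟩ := exists_collisionSwap_eq hcollision
  rw [mem_map_equiv, Equiv.symm_symm] at ha hb
  simp only [hα]
  exact ⟨⟨a, b, hab, rfl⟩, swap_mem_rowStab T hrow,
    mul_ne_left.mpr (Equiv.swap_eq_one_iff.not.mpr hab),
    mul_swap_mem_symMulColStab hπ ha hb, by rw [map_symm_mul_swap ha hb, hα]⟩

end Schur
end
end

section
/- Semistandard tableaux of shape λ with entries in the superalphabet {1,...,m} even and {m+1,...,m+n} odd exist if and only if λ is an (m|n)-hook partition, i.e. λ_{m+1} ≤ n. -/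
open Finset TensorProduct
open scoped Classical

noncomputable section

namespace Schur

variable {X : Type*}

variable (r : ℕ)

/-- semistandard tableaux of shape `λ` with entries in the superalphabet
(`1..m` even, `m+1..m+n` odd) exist iff `λ` is an `(m|n)`-hook partition,
i.e. `λ_{m+1} ≤ n`. -/
theorem stmt7 (m n r : ℕ) (T : BasicTableau r) :
    (∃ j : Fin r → Fin (m + n), Semistandard r (degp m n) T j) ↔ T.lam m ≤ n := by
  constructor
  · rintro ⟨j, hr, hc, he, ho⟩
    by_contra h
    push_neg at h
    -- every cell (q, c) with q ≤ m, c ≤ n exists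
    have hcell : ∀ q c : ℕ, q ≤ m → c ≤ n → ∃ t, T.pos t = (q, c) := by
      intro q c hq hc'
      exact T.surj (q, c) (lt_of_lt_of_le (lt_of_le_of_lt hc' h) (T.antitone q m hq))
    -- entries in column c grow at least as fast as the row index
    have key : ∀ c, c ≤ n → ∀ q, q ≤ m → ∀ t, T.pos t = (q, c) → q ≤ (j t).val := by
      intro c hcn q
      induction q with
      | zero => intro _ t _; exact Nat.zero_le _
      | succ q ih =>
        intro hq t ht
        obtain ⟨s, hs⟩ := hcell q c (by omega) hcn
        have hqs : q ≤ (j s).val := ih (by omega) s hs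
        have hle : j s ≤ j t := hc s t (by rw [hs, ht]) (by rw [hs, ht]; exact Nat.le_succ q)
        have hlev : (j s).val ≤ (j t).val := hle
        by_cases hm : (j s).val < m
        · have hst : s ≠ t := by
            intro e; rw [e, ht] at hs
            exact absurd (congrArg Prod.fst hs) (by simp)
          have hne : j s ≠ j t := he s t hst (by rw [hs, ht]) (by simp [degp, hm])
          have hnv : (j s).val ≠ (j t).val := fun e => hne (Fin.ext e)
          omega
        · omega
    -- pick the cells of row m in columns 0..n
    have hmap : ∀ c : Fin (n + 1), ∃ t, T.pos t = (m, c.val) := fun c =>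
      hcell m c.val le_rfl (by omega)
    choose tc htc using hmap
    have hval : ∀ c, m ≤ (j (tc c)).val := fun c =>
      key c.val (by omega) m le_rfl (tc c) (htc c)
    have hinjf : Function.Injective
        (fun c : Fin (n + 1) => (⟨(j (tc c)).val - m, by
          have h1 := (j (tc c)).isLt
          have h2 := hval c
          omega⟩ : Fin n)) := by
      intro c c' e
      have hv : (j (tc c)).val - m = (j (tc c')).val - m := by
        simpa using congrArg Fin.val e
      have hv1 := hval c
      have hv2 := hval c'
      have hjv : (j (tc c)).val = (j (tc c')).val := by omega
      by_contra hne
      have htne : tc c ≠ tc c' := by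
        intro heq
        have := (htc c).symm.trans (heq ▸ htc c')
        have := congrArg Prod.snd this
        exact hne (Fin.ext (by simpa using this))
      exact ho (tc c) (tc c') htne
        (by rw [htc c, htc c']) (by simp [degp]; omega) (Fin.ext hjv)
    have := Fintype.card_le_of_injective _ hinjf
    simp at this
  · intro hln
    have hb : ∀ t : Fin r, ¬(T.pos t).1 < m → m + (T.pos t).2 < m + n := by
      intro t ht
      have h1 := T.mem t
      have h2 := T.antitone m (T.pos t).1 (by omega)
      omega
    set jf : Fin r → Fin (m + n) := fun t =>
      if h : (T.pos t).1 < m then ⟨(T.pos t).1, by omega⟩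
      else ⟨m + (T.pos t).2, hb t h⟩ with hjf
    have hv1 : ∀ t, (T.pos t).1 < m → (jf t).val = (T.pos t).1 := by
      intro t ht; simp only [hjf]; rw [dif_pos ht]
    have hv2 : ∀ t, ¬(T.pos t).1 < m → (jf t).val = m + (T.pos t).2 := by
      intro t ht; simp only [hjf]; rw [dif_neg ht]
    have hpar0 : ∀ t, degp m n (jf t) = 0 ↔ (jf t).val < m := by
      intro t
      simp only [degp]
      split <;> simp_all
    refine ⟨jf, ?_, ?_, ?_, ?_⟩
    · -- rows weakly increase
      intro t s h1 h2
      rw [Fin.le_def]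
      by_cases hmt : (T.pos t).1 < m
      · rw [hv1 t hmt, hv1 s (h1 ▸ hmt)]; omega
      · rw [hv2 t hmt, hv2 s (h1 ▸ hmt)]; omega
    · -- columns weakly increase
      intro t s h1 h2
      rw [Fin.le_def]
      by_cases hmt : (T.pos t).1 < m <;> by_cases hms : (T.pos s).1 < m
      · rw [hv1 t hmt, hv1 s hms]; omega
      · rw [hv1 t hmt, hv2 s hms]; omega
      · omega
      · rw [hv2 t hmt, hv2 s hms]; omega
    · -- even symbols not repeated in columns
      intro t s hts h1 hpar
      have hvt : (jf t).val < m := (hpar0 t).mp hpar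
      have hmt : (T.pos t).1 < m := by
        by_contra hmt
        rw [hv2 t hmt] at hvt; omega
      intro e
      have ev : (jf t).val = (jf s).val := congrArg Fin.val e
      by_cases hms : (T.pos s).1 < m
      · rw [hv1 t hmt, hv1 s hms] at ev
        exact hts (T.inj (Prod.ext ev h1))
      · rw [hv1 t hmt, hv2 s hms] at ev; omega
    · -- odd symbols not repeated in rows
      intro t s hts h1 hpar
      have hvt : ¬(jf t).val < m := fun hc => hpar ((hpar0 t).mpr hc)
      have hmt : ¬(T.pos t).1 < m := by
        intro hmt
        rw [hv1 t hmt] at hvt; omega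
      have hms : ¬(T.pos s).1 < m := h1 ▸ hmt
      intro e
      have ev : (jf t).val = (jf s).val := congrArg Fin.val e
      rw [hv2 t hmt, hv2 s hms] at ev
      exact hts (T.inj (Prod.ext h1 (by omega)))

end Schur
end
end

section
/- A tableau T_j of shape λ (entries weakly increasing down each column, no even entry repeated in a column) that is minimal in the column-lexicographic order among tableaux of its content is either semistandard or contains two identical odd entries in the same row. -/
open Finset TensorProduct
open scoped Classical

noncomputable section

namespace Schur

variable {X : Type*}

variable (r : ℕ)

/-- a tableau `T_j` with weakly increasing columns, no even entry
repeated in a column, and minimal in the column-lexicographic order among tableaux of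
its content, is either semistandard or has two identical odd entries in a row. -/
theorem stmt11 (m n r : ℕ) (T : BasicTableau r) (j : Fin r → Fin (m + n))
    (hcols : ∀ t s, (T.pos t).2 = (T.pos s).2 → (T.pos t).1 ≤ (T.pos s).1 → j t ≤ j s)
    (heven : ∀ t s, t ≠ s → (T.pos t).2 = (T.pos s).2 → (j t).val < m → j t ≠ j s)
    (hmin : ∀ k : Fin r → Fin (m + n), sameContent r j k → ¬ colLexLt r T k j) :
    Semistandard r (degp m n) T j ∨
      ∃ t s, t ≠ s ∧ (T.pos t).1 = (T.pos s).1 ∧ j t = j s ∧ m ≤ (j t).val := by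
  by_cases h : ∃ t s, t ≠ s ∧ (T.pos t).1 = (T.pos s).1 ∧ j t = j s ∧ m ≤ (j t).val
  · exact Or.inr h
  push_neg at h
  left
  refine ⟨?_, hcols, ?_, ?_⟩
  · -- rows weakly increase
    intro t s hrow hcol
    by_contra hlt
    push_neg at hlt
    have hne : t ≠ s := by
      intro he; subst he; exact absurd hlt (lt_irrefl _)
    have hcolne : (T.pos t).2 < (T.pos s).2 := by
      rcases lt_or_eq_of_le hcol with h' | h'
      · exact h'
      · exfalso
        have hp : T.pos t = T.pos s := Prod.ext hrow h'
        exact hne (T.inj hp)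
    set k : Fin r → Fin (m + n) := j ∘ (Equiv.swap t s) with hk
    refine hmin k ?_ ?_
    · intro v
      refine Finset.card_bij' (fun x _ => Equiv.swap t s x)
        (fun x _ => Equiv.swap t s x) ?_ ?_ ?_ ?_
      · intro x hx
        simp only [Finset.mem_filter, Finset.mem_univ, true_and] at hx ⊢
        simp [hk, hx]
      · intro x hx
        simp only [Finset.mem_filter, Finset.mem_univ, true_and, hk,
          Function.comp] at hx ⊢
        exact hx
      · intro x _; simp
      · intro x _; simp
    · refine ⟨t, ?_, ?_⟩
      · simpa [hk] using hlt
      · intro s' hs'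
        have hs't : s' ≠ t := by
          rintro rfl
          rcases hs' with h1 | ⟨h1, h2⟩
          · exact absurd h1 (lt_irrefl _)
          · exact absurd h2 (lt_irrefl _)
        have hs's : s' ≠ s := by
          rintro rfl
          rcases hs' with h1 | ⟨h1, h2⟩
          · exact absurd h1 (lt_asymm hcolne)
          · exact absurd h1 (ne_of_gt hcolne)
        simp [hk, Equiv.swap_apply_of_ne_of_ne hs't hs's]
  · -- even entries not repeated in columns
    intro t s hne hcoleq hpar
    have hm : (j t).val < m := by
      by_contra hm
      simp [degp, hm] at hpar
    exact heven t s hne hcoleq hm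
  · -- odd entries not repeated in rows
    intro t s hne hroweq hpar heq
    have hm : ¬ (j t).val < m := by
      intro hm; simp [degp, hm] at hpar
    exact hm (h t s hne hroweq heq)

end Schur
end
end

section
/- Among all tableaux of shape λ with the same content as T_{ℓ̄(λ)} (the tableau whose j-th column is filled entirely with the odd colored symbol j̄), the tableau T_{ℓ̄(λ)} is the unique maximal element with respect to the column dominance preorder ⊴_c, and it is the unique semistandard tableau of that shape and content. -/
open Finset TensorProduct
open scoped Classical

noncomputable section

namespace Schur

variable {X : Type*}

variable (r : ℕ)

/-
A filling with the content of `T_{ℓ̄(λ)}` has at most `#{cells in columns ≤ p}` entries `≤ p`,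
and at most `#{cells in columns < q}` entries in the first `q` columns, which are the counts of
`T_{ℓ̄(λ)}`; so its count vector is dominated entrywise, hence lexicographically. If it is
lexicographically at least as large, all counts agree, and comparing columns `c` and `c + 1` at
`p = c - 1` shows that no entry lies below its column index. A semistandard filling by odd
symbols increases strictly along rows, so it also dominates the column index cellwise. Finally,
two fillings of the same content, one dominating the other cellwise, coincide.
-/

section Fillings

variable {r}

theorem card_filter_eq_of_sameContent {f g : Fin r → X} (h : sameContent r f g) (P : X → Prop)
    [DecidablePred P] :
    #{t | P (f t)} = #{t | P (g t)} := by
  have hmap : univ.val.map f = univ.val.map g :=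
    Multiset.ext.mpr fun v => by
      simp only [Multiset.count_map, eq_comm (a := v)]
      exact h v
  have key : ∀ k : Fin r → X, #{t | P (k t)} = Multiset.card ((univ.val.map k).filter P) := by
    intro k
    rw [Multiset.filter_map, Multiset.card_map]
    rfl
  rw [key, key, hmap]

theorem eq_of_sameContent_of_le [LinearOrder X] {f g : Fin r → X} (h : sameContent r f g)
    (hle : ∀ t, g t ≤ f t) : f = g := by
  funext t
  have hsub : univ.filter (fun s => f s ≤ g t) ⊆ univ.filter (fun s => g s ≤ g t) := by
    intro s hs
    simp only [mem_filter, mem_univ, true_and] at hs ⊢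
    exact (hle s).trans hs
  have hset := eq_of_subset_of_card_le hsub (card_filter_eq_of_sameContent h (· ≤ g t)).ge
  have ht : t ∈ univ.filter (fun s => g s ≤ g t) := by simp
  rw [← hset, mem_filter] at ht
  exact (hle t).antisymm' ht.2

theorem colDom_of_cCount_le [LinearOrder X] [WellFoundedLT X] (T : BasicTableau r)
    {f g : Fin r → X} (hle : ∀ q p, cCount r T f q p ≤ cCount r T g q p) : colDom r T f g := by
  by_cases hall : ∀ q p, cCount r T f q p = cCount r T g q p
  · exact Or.inl hall
  right
  push Not at hall
  let q₀ := Nat.find hall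
  obtain ⟨p₀, hp₀, hp₀_min⟩ :=
    wellFounded_lt.has_min {p | cCount r T f q₀ p ≠ cCount r T g q₀ p} (Nat.find_spec hall)
  refine ⟨q₀, p₀, (hle q₀ p₀).lt_of_ne hp₀, ?_⟩
  rintro q p (hq | ⟨rfl, hp⟩)
  · by_contra hne
    exact Nat.find_min hall hq ⟨p, hne⟩
  · by_contra hne
    exact hp₀_min p hne hp

theorem cCount_eq_of_colDom_of_le [LinearOrder X] (T : BasicTableau r) {f g : Fin r → X}
    (hdom : colDom r T g f) (hle : ∀ q p, cCount r T f q p ≤ cCount r T g q p) :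
    ∀ q p, cCount r T f q p = cCount r T g q p := by
  rcases hdom with hall | ⟨q, p, hlt, -⟩
  · exact fun q p => (hall q p).symm
  · exact absurd (hle q p) hlt.not_ge

variable (T : BasicTableau r)

theorem cCount_le_cCount_col {f : Fin r → ℕ} (h : sameContent r f (fun t => (T.pos t).2))
    (q p : ℕ) : cCount r T f q p ≤ cCount r T (fun t => (T.pos t).2) q p := by
  unfold cCount
  by_cases hqp : q ≤ p + 1
  · refine card_le_card fun t ht => ?_
    simp only [mem_filter, mem_univ, true_and] at ht ⊢
    omega
  · calc #{t | (T.pos t).2 < q ∧ f t ≤ p}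
        ≤ #{t | f t ≤ p} := card_le_card (monotone_filter_right _ fun _ _ => And.right)
      _ = #{t | (T.pos t).2 ≤ p} := card_filter_eq_of_sameContent h (· ≤ p)
      _ = #{t | (T.pos t).2 < q ∧ (T.pos t).2 ≤ p} := by
        congr 1
        ext t
        simp only [mem_filter, mem_univ, true_and]
        omega

theorem col_le_of_cCount_eq {f : Fin r → ℕ}
    (h : ∀ q p, cCount r T f q p = cCount r T (fun t => (T.pos t).2) q p) (t : Fin r) :
    (T.pos t).2 ≤ f t := by
  by_contra! hlt
  set c := (T.pos t).2
  have hcol : cCount r T (fun t => (T.pos t).2) c (c - 1) =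
      cCount r T (fun t => (T.pos t).2) (c + 1) (c - 1) := by
    unfold cCount
    congr 1
    ext s
    simp only [mem_filter, mem_univ, true_and]
    omega
  have hsub : univ.filter (fun s => (T.pos s).2 < c ∧ f s ≤ c - 1) ⊂
      univ.filter (fun s => (T.pos s).2 < c + 1 ∧ f s ≤ c - 1) := by
    refine ssubset_iff_of_subset (fun s hs => ?_) |>.mpr ⟨t, ?_, ?_⟩
    · simp only [mem_filter, mem_univ, true_and] at hs ⊢
      omega
    all_goals simp only [mem_filter, mem_univ, true_and]; omega
  have hcard := card_lt_card hsub
  have h₁ := h c (c - 1)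
  have h₂ := h (c + 1) (c - 1)
  unfold cCount at h₁ h₂ hcol
  omega

theorem semistandard_col {par : ℕ → ℕ} (hpar : ∀ x, par x ≠ 0) :
    Semistandard r par T (fun t => (T.pos t).2) :=
  ⟨fun _ _ _ h => h, fun _ _ h _ => h.le, fun _ _ _ _ h => absurd h (hpar _),
    fun _ _ hts hrow _ hcol => hts (T.inj (Prod.ext hrow hcol))⟩

theorem col_le_of_semistandard {par : ℕ → ℕ} (hpar : ∀ x, par x ≠ 0) {f : Fin r → ℕ}
    (hf : Semistandard r par T f) (t : Fin r) : (T.pos t).2 ≤ f t := by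
  suffices ∀ c t, (T.pos t).2 = c → c ≤ f t from this _ t rfl
  intro c
  induction c with
  | zero => exact fun _ _ => Nat.zero_le _
  | succ c ih =>
    intro t ht
    -- the cell to the left of `t` holds a strictly smaller odd entry
    obtain ⟨s, hs⟩ := T.surj ((T.pos t).1, c) (by have := T.mem t; dsimp only; omega)
    have hrow : (T.pos s).1 = (T.pos t).1 := by rw [hs]
    have hcol : (T.pos s).2 = c := by rw [hs]
    have hts : t ≠ s := by rintro rfl; omega
    have hle : f s ≤ f t := hf.1 s t hrow (by omega)
    have hne : f t ≠ f s := hf.2.2.2 t s hts hrow.symm (hpar _)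
    have := ih s hcol
    omega

end Fillings

/-- Here the alphabet of colored symbols `j̄` is `ℕ` and every symbol is odd (`par = 1`). -/
theorem stmt12 (r : ℕ) (T : BasicTableau r) :
    (∀ f : Fin r → ℕ, sameContent r f (fun t => (T.pos t).2) →
        colDom r T f (fun t => (T.pos t).2)) ∧
    (∀ f : Fin r → ℕ, sameContent r f (fun t => (T.pos t).2) →
        colDom r T (fun t => (T.pos t).2) f → f = fun t => (T.pos t).2) ∧
    Semistandard r (fun _ : ℕ => 1) T (fun t => (T.pos t).2) ∧
    (∀ f : Fin r → ℕ, sameContent r f (fun t => (T.pos t).2) →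
        Semistandard r (fun _ : ℕ => 1) T f → f = fun t => (T.pos t).2) := by
  have hodd : ∀ x : ℕ, (fun _ : ℕ => 1) x ≠ 0 := fun _ => one_ne_zero
  refine ⟨fun f hf => colDom_of_cCount_le T (cCount_le_cCount_col T hf), ?_,
    semistandard_col T hodd, ?_⟩
  · intro f hf hdom
    have hcount := cCount_eq_of_colDom_of_le T hdom (cCount_le_cCount_col T hf)
    exact eq_of_sameContent_of_le hf (col_le_of_cCount_eq T hcount)
  · intro f hf hss
    exact eq_of_sameContent_of_le hf (col_le_of_semistandard T hodd hss)

end Schur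
end
end

section
/- Triangularity: for semistandard tableaux T_k, T_l, T_i, T_j of shape λ, if C_L(T_k) T[i:j] ≠ 0 then T_k ⊴_c T_i, and if T[i:j] C_P(T_l) ≠ 0 then T_l ⊴_r T_j. -/
open Finset TensorProduct
open scoped Classical

noncomputable section

namespace Schur

variable {X : Type*}

variable (r : ℕ)

/-- The extended superalphabet: uncolored symbols, colored even symbols `j̲`,
and colored odd symbols `j̄`. -/
abbrev Xext (m n : ℕ) := Fin (m + n) ⊕ ℕ ⊕ ℕ

/-- Parity on the extended alphabet. -/
def parExt (m n : ℕ) : Xext m n → ℕ :=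
  Sum.elim (degp m n) (Sum.elim (fun _ => 0) (fun _ => 1))

/-- `g` is one of the summands of `C_L(T_k)` applied to the filling `f`: for each
symbol `a` and column `c`, exactly `c_a(T_k,c)` occurrences of `a` in `f` are replaced
by the colored odd symbol `c̄`. -/
def ReplacedL (m n r : ℕ) (T : BasicTableau r) (k : Fin r → Fin (m + n))
    (f g : Fin r → Xext m n) : Prop :=
  (∀ t, g t = f t ∨ ((∃ a, f t = Sum.inl a) ∧ ∃ c : ℕ, g t = Sum.inr (Sum.inr c))) ∧
  ∀ (a : Fin (m + n)) (c : ℕ),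
    (univ.filter (fun t => f t = Sum.inl a ∧ g t = Sum.inr (Sum.inr c))).card =
    (univ.filter (fun t => k t = a ∧ (T.pos t).2 = c)).card

/-- `h` is one of the summands of `C_P(T_l)` applied to the filling `f`: for each
symbol `a` and row `c`, exactly `r_a(T_l,c)` occurrences of `a` in `f` are replaced
by the colored even symbol `c̲`. -/
def ReplacedP (m n r : ℕ) (T : BasicTableau r) (l : Fin r → Fin (m + n))
    (f h : Fin r → Xext m n) : Prop :=
  (∀ t, h t = f t ∨ ((∃ a, f t = Sum.inl a) ∧ ∃ c : ℕ, h t = Sum.inr (Sum.inl c))) ∧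
  ∀ (a : Fin (m + n)) (c : ℕ),
    (univ.filter (fun t => f t = Sum.inl a ∧ h t = Sum.inr (Sum.inl c))).card =
    (univ.filter (fun t => l t = a ∧ (T.pos t).1 = c)).card

/-! A nonzero summand `g` of `C_L(T_k) T[i:j]` replaces every entry of `T_i` by a coloured odd
symbol, since the prescribed replacement counts already add up to `r`; and its colours are
distinct along each row, since otherwise the row symmetrization cancels in pairs. The colouring
`γ` has the column content of `T_k`, so `c_{qp}(k)` counts the cells with `γ < q` and `i ≤ p`.
Row by row these are at most the cells of the first `q` columns with `i ≤ p`, because `i` weakly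
increases along rows and `γ` is injective on rows. Hence `c_{qp}(k) ≤ c_{qp}(i)` for all `q, p`,
which forces column dominance. The place case is the transpose: even colours, injective on
columns because of the column antisymmetrization. -/

theorem _root_.Finset.sum_eq_zero_of_swap_mul_eq_neg {α M : Type*} [DecidableEq α]
    [AddCommGroup M] {S : Finset (Equiv.Perm α)} {a b : α} (hab : a ≠ b)
    (hS : ∀ σ ∈ S, Equiv.swap a b * σ ∈ S) {f : Equiv.Perm α → M}
    (hf : ∀ σ ∈ S, f (Equiv.swap a b * σ) = -f σ) : ∑ σ ∈ S, f σ = 0 := by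
  refine Finset.sum_involution (fun σ _ => Equiv.swap a b * σ)
    (fun σ hσ => by rw [hf σ hσ, add_neg_cancel]) (fun σ _ _ h => hab ?_) hS
    (fun σ _ => Equiv.swap_mul_self_mul a b σ)
  have : Equiv.swap a b = 1 := mul_eq_right.mp h
  simpa using (Equiv.ext_iff.mp this a).symm

section Stabilizers

variable {r}

theorem swap_mul_mem_rowStab {T : BasicTableau r} {a b : Fin r}
    (hab : (T.pos a).1 = (T.pos b).1) {σ : Equiv.Perm (Fin r)} (hσ : σ ∈ rowStab r T) :
    Equiv.swap a b * σ ∈ rowStab r T := by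
  simp only [rowStab, mem_filter, mem_univ, true_and, Equiv.Perm.mul_apply] at hσ ⊢
  intro t
  rw [Equiv.apply_swap_eq_self (v := fun t => (T.pos t).1) hab, hσ]

theorem swap_mul_mem_colStab {T : BasicTableau r} {a b : Fin r}
    (hab : (T.pos a).2 = (T.pos b).2) {σ : Equiv.Perm (Fin r)} (hσ : σ ∈ colStab r T) :
    Equiv.swap a b * σ ∈ colStab r T := by
  simp only [colStab, mem_filter, mem_univ, true_and, Equiv.Perm.mul_apply] at hσ ⊢
  intro t
  rw [Equiv.apply_swap_eq_self (v := fun t => (T.pos t).2) hab, hσ]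

end Stabilizers

section Signs

variable {r} {par : X → ℕ} {f : Fin r → X}

theorem starSign_eq_signAux (hf : ∀ t, par (f t) ≠ 0) (π : Equiv.Perm (Fin r)) :
    starSign r par f π = (Equiv.Perm.signAux π : ℤ) := by
  rw [Equiv.Perm.signAux, Units.coe_prod]
  simp only [apply_ite Units.val, Units.val_neg, Units.val_one, prod_ite, prod_const_one,
    prod_const, mul_one, starSign, hf, ne_eq, not_false_eq_true, and_true]
  congr 1
  refine Finset.card_nbij' (fun p => ⟨p.2, p.1⟩) (fun p => (p.2, p.1)) ?_ ?_ (fun _ _ => rfl)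
    (fun _ _ => rfl) <;> intro p hp <;>
    simp only [coe_filter, mem_univ, true_and, Set.mem_ofPred_eq, Equiv.Perm.mem_finPairsLT]
      at hp ⊢
  · exact ⟨hp.1, hp.2.le⟩
  · exact ⟨hp.1, hp.2.lt_of_ne (π.injective.ne hp.1.ne')⟩

theorem starSign_swap_mul (hf : ∀ t, par (f t) ≠ 0) {a b : Fin r} (hab : a ≠ b)
    (π : Equiv.Perm (Fin r)) :
    starSign r par f (Equiv.swap a b * π) = -starSign r par f π := by
  rw [starSign_eq_signAux hf, starSign_eq_signAux hf, Equiv.Perm.signAux_mul,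
    Equiv.Perm.signAux_swap hab]
  simp

theorem starSign_eq_one (hf : ∀ t, par (f t) = 0) (π : Equiv.Perm (Fin r)) :
    starSign r par f π = 1 := by
  simp [starSign, hf]

end Signs

section Vanishing

variable {r} (K : Type*) [CommRing K] {par : X → ℕ} (T : BasicTableau r)

theorem symmA_eq_zero_of_row_repeat {g : Fin r → X} (j : Fin r → X)
    (hg : ∀ t, par (g t) ≠ 0) {a b : Fin r} (hab : a ≠ b)
    (hrow : (T.pos a).1 = (T.pos b).1) (hgab : g a = g b) : symmA r K par T g j = 0 := by
  refine Finset.sum_eq_zero_of_swap_mul_eq_neg hab (fun ρ => swap_mul_mem_rowStab hrow)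
    fun ρ _ => ?_
  have hgρ : g ∘ ⇑(Equiv.swap a b * ρ) = g ∘ ρ := by
    ext t; exact Equiv.apply_swap_eq_self hgab (ρ t)
  simp only [hgρ, starSign_swap_mul hg hab, mul_neg, neg_mul, neg_smul, sum_neg_distrib]

theorem symmA_eq_zero_of_col_repeat (i : Fin r → X) {h : Fin r → X}
    (hh : ∀ t, par (h t) = 0) {a b : Fin r} (hab : a ≠ b)
    (hcol : (T.pos a).2 = (T.pos b).2) (hhab : h a = h b) : symmA r K par T i h = 0 := by
  refine Finset.sum_eq_zero fun ρ _ => Finset.sum_eq_zero_of_swap_mul_eq_neg hab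
    (fun κ => swap_mul_mem_colStab hcol) fun κ _ => ?_
  have hhκ : h ∘ ⇑(Equiv.swap a b * κ) = h ∘ κ := by
    ext t; exact Equiv.apply_swap_eq_self hhab (κ t)
  simp only [hhκ, starSign_eq_one hh, map_mul, Equiv.Perm.sign_swap hab, Units.val_neg,
    neg_mul, neg_smul, one_mul]

end Vanishing

section Counting

variable {ι β γ : Type*} [Fintype ι]

theorem card_filter_comp_eq_of_card_fiber_eq [DecidableEq β] {u u' : ι → β}
    (h : ∀ b, #{t | u t = b} = #{t | u' t = b}) (P : β → Prop) [DecidablePred P] :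
    #{t | P (u t)} = #{t | P (u' t)} := by
  have hmap : univ.val.map u = univ.val.map u' := by
    ext b
    simpa [Multiset.count_map, Finset.card_def, eq_comm] using h b
  simpa [Finset.card_def, Multiset.filter_map] using congrArg (fun s => (s.filter P).card) hmap

theorem mem_range_of_card_fiber_eq [DecidableEq β] [DecidableEq γ] {u : ι → β} {v : ι → γ}
    {E : β → γ} (hE : Function.Injective E) (h : ∀ b, #{t | v t = E b} = #{t | u t = b})
    (t : ι) :
    v t ∈ Set.range E := by
  set S := (univ.image u).image E
  have hcard : #{t | v t ∈ S} = #(univ : Finset ι) := by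
    rw [card_eq_sum_card_fiberwise (s := {t | v t ∈ S}) (t := S)
        fun t ht => (mem_filter.mp ht).2, sum_image hE.injOn, card_eq_sum_card_image u univ]
    refine sum_congr rfl fun b hb => ?_
    rw [filter_filter, ← h b]
    congr 1
    ext t
    simp only [mem_filter, mem_univ, true_and]
    exact and_iff_right_of_imp fun hv => hv ▸ mem_image_of_mem E hb
  obtain ⟨b, -, hb⟩ := mem_image.mp (card_filter_eq_iff.mp hcard t (mem_univ t))
  exact ⟨b, hb⟩

theorem exists_eq_comp_of_card_eq {α Y : Type*} [DecidableEq α] [DecidableEq Y] {emb : ℕ → Y}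
    (hemb : Function.Injective emb) {i k : ι → α} {g : ι → Y} {pos : ι → ℕ}
    (h : ∀ a c, #{t | i t = a ∧ g t = emb c} = #{t | k t = a ∧ pos t = c}) :
    ∃ γ : ι → ℕ, g = emb ∘ γ ∧
      ∀ b, #{t | (i t, γ t) = b} = #{t | (k t, pos t) = b} := by
  have hE : Function.Injective (Prod.map id emb : α × ℕ → α × Y) :=
    Function.injective_id.prodMap hemb
  have hfib : ∀ b, #{t | (i t, g t) = Prod.map id emb b} = #{t | (k t, pos t) = b} := by
    rintro ⟨a, c⟩
    simpa only [Prod.map_apply, id_eq, Prod.mk.injEq] using h a c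
  choose w hw using mem_range_of_card_fiber_eq hE hfib
  have hi : ∀ t, (w t).1 = i t := fun t => congrArg Prod.fst (hw t)
  refine ⟨fun t => (w t).2, funext fun t => (congrArg Prod.snd (hw t)).symm, fun b => ?_⟩
  rw [← hfib b]
  congr 1
  ext t
  simp only [mem_filter, mem_univ, true_and]
  rw [← hw t, hE.eq_iff, ← hi t]

end Counting

section RowCounting

variable {ι N : Type*} [Fintype ι] [LinearOrder N] (row col γ : ι → ℕ) {i : ι → N}

theorem card_row_filter_le
    (hleft : ∀ t y, y < col t → ∃ s, row s = row t ∧ col s = y)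
    (hmono : ∀ t s, row t = row s → col t ≤ col s → i t ≤ i s)
    (hγ : ∀ t s, row t = row s → γ t = γ s → t = s) (q : ℕ) (p : N) (ρ : ℕ) :
    #{t | (γ t < q ∧ i t ≤ p) ∧ row t = ρ} ≤
      #{t | (col t < q ∧ i t ≤ p) ∧ row t = ρ} := by
  by_cases hshort : ∀ t, row t = ρ → i t ≤ p → col t < q
  · exact card_le_card fun t ht => by
      simp only [mem_filter, mem_univ, true_and] at ht ⊢
      exact ⟨⟨hshort t ht.2 ht.1.2, ht.1.2⟩, ht.2⟩
  push Not at hshort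
  obtain ⟨t₀, hρ, hp, hq⟩ := hshort
  calc #{t | (γ t < q ∧ i t ≤ p) ∧ row t = ρ} ≤ #(range q) := by
        refine card_le_card_of_injOn γ (fun t ht => ?_) fun t ht s hs hts => ?_
        · simp only [coe_filter, mem_univ, true_and, Set.mem_ofPred_eq] at ht
          simpa using ht.1.1
        · simp only [coe_filter, mem_univ, true_and, Set.mem_ofPred_eq] at ht hs
          exact hγ t s (ht.2.trans hs.2.symm) hts
    _ ≤ #(image col {t | (col t < q ∧ i t ≤ p) ∧ row t = ρ}) := by
        refine card_le_card fun y hy => ?_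
        have hyq := mem_range.mp hy
        obtain ⟨s, hs, rfl⟩ := hleft t₀ y (hyq.trans_le hq)
        refine mem_image_of_mem col ?_
        simp only [mem_filter, mem_univ, true_and]
        exact ⟨⟨hyq, (hmono s t₀ hs (hyq.trans_le hq).le).trans hp⟩, hs.trans hρ⟩
    _ ≤ _ := card_image_le

theorem card_filter_lt_le
    (hleft : ∀ t y, y < col t → ∃ s, row s = row t ∧ col s = y)
    (hmono : ∀ t s, row t = row s → col t ≤ col s → i t ≤ i s)
    (hγ : ∀ t s, row t = row s → γ t = γ s → t = s) (q : ℕ) (p : N) :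
    #{t | γ t < q ∧ i t ≤ p} ≤ #{t | col t < q ∧ i t ≤ p} := by
  rw [card_eq_sum_card_fiberwise fun t _ => mem_image_of_mem row (mem_univ t),
    card_eq_sum_card_fiberwise fun t _ => mem_image_of_mem row (mem_univ t)]
  refine sum_le_sum fun ρ _ => ?_
  simpa only [filter_filter] using card_row_filter_le row col γ hleft hmono hγ q p ρ

end RowCounting

theorem lex_eq_or_lt_of_le {Y : Type*} [LinearOrder Y] [WellFoundedLT Y] {F G : ℕ → Y → ℕ}
    (hle : ∀ q p, F q p ≤ G q p) :
    (∀ q p, F q p = G q p) ∨ ∃ q p, F q p < G q p ∧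
      ∀ q' p', (q' < q ∨ (q' = q ∧ p' < p)) → F q' p' = G q' p' := by
  by_cases hall : ∀ q p, F q p = G q p
  · exact Or.inl hall
  push Not at hall
  obtain ⟨q, p, hqp⟩ := hall
  obtain ⟨x, hx, hmin⟩ := (wellFounded_lt (α := ℕ ×ₗ Y)).has_min
    {x | F (ofLex x).1 (ofLex x).2 ≠ G (ofLex x).1 (ofLex x).2} ⟨toLex (q, p), hqp⟩
  refine Or.inr ⟨(ofLex x).1, (ofLex x).2, (hle _ _).lt_of_ne hx, fun q' p' hlt => ?_⟩
  by_contra hne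
  exact hmin (toLex (q', p')) hne (Prod.Lex.toLex_lt_toLex.mpr hlt)

section Triangularity

variable {r} {m n : ℕ} {T : BasicTableau r}

theorem BasicTableau.exists_pos_of_lt_col (T : BasicTableau r) (t : Fin r) {y : ℕ}
    (hy : y < (T.pos t).2) : ∃ s, (T.pos s).1 = (T.pos t).1 ∧ (T.pos s).2 = y := by
  obtain ⟨s, hs⟩ := T.surj ((T.pos t).1, y) (hy.trans (T.mem t))
  exact ⟨s, by simp [hs]⟩

theorem BasicTableau.exists_pos_of_lt_row (T : BasicTableau r) (t : Fin r) {y : ℕ}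
    (hy : y < (T.pos t).1) : ∃ s, (T.pos s).2 = (T.pos t).2 ∧ (T.pos s).1 = y := by
  obtain ⟨s, hs⟩ := T.surj (y, (T.pos t).2) ((T.mem t).trans_le (T.antitone _ _ hy.le))
  exact ⟨s, by simp [hs]⟩

theorem colDom_of_replacedL (K : Type*) [CommRing K] {k i : Fin r → Fin (m + n)}
    {g : Fin r → Xext m n} (j : Fin r → Xext m n)
    (hi : ∀ t s, (T.pos t).1 = (T.pos s).1 → (T.pos t).2 ≤ (T.pos s).2 → i t ≤ i s)
    (hg : ReplacedL m n r T k (Sum.inl ∘ i) g) (hne : symmA r K (parExt m n) T g j ≠ 0) :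
    colDom r T k i := by
  have hcount : ∀ a c, #{t | i t = a ∧ g t = Sum.inr (Sum.inr c)} =
      #{t | k t = a ∧ (T.pos t).2 = c} := by
    simpa only [Function.comp_apply, Sum.inl.injEq] using hg.2
  obtain ⟨γ, rfl, hγ⟩ := exists_eq_comp_of_card_eq
    (Sum.inr_injective.comp Sum.inr_injective) hcount
  have hrow : ∀ t s, (T.pos t).1 = (T.pos s).1 → γ t = γ s → t = s := by
    refine fun t s hts hγts => by_contra fun hne' => hne ?_
    exact symmA_eq_zero_of_row_repeat K T j (fun _ => by simp [parExt]) hne' hts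
      (by simp [hγts])
  refine lex_eq_or_lt_of_le fun q p => ?_
  calc cCount r T k q p = #{t | γ t < q ∧ i t ≤ p} :=
        card_filter_comp_eq_of_card_fiber_eq (fun b => (hγ b).symm) fun b => b.2 < q ∧ b.1 ≤ p
    _ ≤ cCount r T i q p := 
        card_filter_lt_le _ _ γ (fun t _ => T.exists_pos_of_lt_col t) hi hrow q p

theorem rowDom_of_replacedP (K : Type*) [CommRing K] {l j : Fin r → Fin (m + n)}
    {h : Fin r → Xext m n} (i : Fin r → Xext m n)
    (hj : ∀ t s, (T.pos t).2 = (T.pos s).2 → (T.pos t).1 ≤ (T.pos s).1 → j t ≤ j s)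
    (hh : ReplacedP m n r T l (Sum.inl ∘ j) h) (hne : symmA r K (parExt m n) T i h ≠ 0) :
    rowDom r T l j := by
  have hcount : ∀ a c, #{t | j t = a ∧ h t = Sum.inr (Sum.inl c)} =
      #{t | l t = a ∧ (T.pos t).1 = c} := by
    simpa only [Function.comp_apply, Sum.inl.injEq] using hh.2
  obtain ⟨η, rfl, hη⟩ := exists_eq_comp_of_card_eq
    (Sum.inr_injective.comp Sum.inl_injective) hcount
  have hcol : ∀ t s, (T.pos t).2 = (T.pos s).2 → η t = η s → t = s := by
    refine fun t s hts hηts => by_contra fun hne' => hne ?_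
    exact symmA_eq_zero_of_col_repeat K T i (fun _ => by simp [parExt]) hne' hts
      (by simp [hηts])
  refine lex_eq_or_lt_of_le fun q p => ?_
  calc rCount r T l q p = #{t | η t < q ∧ j t ≤ p} :=
        card_filter_comp_eq_of_card_fiber_eq (fun b => (hη b).symm) fun b => b.2 < q ∧ b.1 ≤ p
    _ ≤ rCount r T j q p := 
        card_filter_lt_le _ _ η (fun t _ => T.exists_pos_of_lt_row t) hj hcol q p

end Triangularity

theorem stmt14_general (m n r : ℕ) (K : Type*) [Field K]
    (T : BasicTableau r)
    (k l i j : Fin r → Fin (m + n))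
    (hi : Semistandard r (degp m n) T i) (hj : Semistandard r (degp m n) T j) :
    ((∑ᶠ g ∈ {g | ReplacedL m n r T k (Sum.inl ∘ i) g},
        symmA r K (parExt m n) T g (Sum.inl ∘ j)) ≠ 0 → colDom r T k i) ∧
    ((∑ᶠ h ∈ {h | ReplacedP m n r T l (Sum.inl ∘ j) h},
        symmA r K (parExt m n) T (Sum.inl ∘ i) h) ≠ 0 → rowDom r T l j) := by
  refine ⟨fun hsum => ?_, fun hsum => ?_⟩
  · obtain ⟨g, hg, hne⟩ := exists_ne_zero_of_finsum_mem_ne_zero hsum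
    exact colDom_of_replacedL K _ hi.1 hg hne
  · obtain ⟨h, hh, hne⟩ := exists_ne_zero_of_finsum_mem_ne_zero hsum
    exact rowDom_of_replacedP K _ hj.2.1 hh hne

/-- triangularity: for semistandard `T_k, T_l, T_i, T_j`, if
`C_L(T_k) T[i:j] ≠ 0` then `T_k ⊴_c T_i`, and if `T[i:j] C_P(T_l) ≠ 0` then
`T_l ⊴_r T_j`. -/
theorem stmt14 (m n r : ℕ) (K : Type*) [Field K] [CharZero K]
    (T : BasicTableau r) (hook : T.lam m ≤ n)
    (k l i j : Fin r → Fin (m + n))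
    (hk : Semistandard r (degp m n) T k) (hl : Semistandard r (degp m n) T l)
    (hi : Semistandard r (degp m n) T i) (hj : Semistandard r (degp m n) T j) :
    ((∑ᶠ g ∈ {g | ReplacedL m n r T k (Sum.inl ∘ i) g},
        symmA r K (parExt m n) T g (Sum.inl ∘ j)) ≠ 0 → colDom r T k i) ∧
    ((∑ᶠ h ∈ {h | ReplacedP m n r T l (Sum.inl ∘ j) h},
        symmA r K (parExt m n) T (Sum.inl ∘ i) h) ≠ 0 → rowDom r T l j) :=
  stmt14_general m n r K T k l i j hi hj

end Schur
end
end
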